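/- The Dunkl operators pairwise commute: for all i, j ∈ {1,…,n}, Yᵢ ∘ Yⱼ = Yⱼ ∘ Yᵢ as 𝔽-linear endomorphisms of 𝔽[x₁,…,xₙ]. -/

import Mathlib

open MvPolynomial

noncomputable section

variable (F : Type) [Field F] [CharZero F] {n : ℕ}

/-- The action of a permutation `w` on polynomials, permuting the variables. -/
def permOp (w : Equiv.Perm (Fin n)) : Module.End F (MvPolynomial (Fin n) F) :=
  (MvPolynomial.rename (⇑w)).toLinearMap

/-- The operator exchanging the variables `xᵢ` and `xⱼ`. -/
def swapOp (i j : Fin n) : Module.End F (MvPolynomial (Fin n) F) :=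
  permOp F (Equiv.swap i j)

theorem delta_existsUnique (i j : Fin n) (hij : i ≠ j) (f : MvPolynomial (Fin n) F) :
    ∃! g : MvPolynomial (Fin n) F,
      (X i - X j) * g = f - MvPolynomial.rename (⇑(Equiv.swap i j)) f := by
  have hne : (X i - X j : MvPolynomial (Fin n) F) ≠ 0 :=
    sub_ne_zero_of_ne (fun h => hij (MvPolynomial.X_injective h))
  have hex : ∃ g : MvPolynomial (Fin n) F,
      (X i - X j) * g = f - MvPolynomial.rename (⇑(Equiv.swap i j)) f := by
    induction f using MvPolynomial.induction_on with
    | C a => exact ⟨0, by simp⟩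
    | add p q hp hq =>
      obtain ⟨g1, h1⟩ := hp
      obtain ⟨g2, h2⟩ := hq
      exact ⟨g1 + g2, by rw [map_add]; linear_combination h1 + h2⟩
    | mul_X p k hp =>
      obtain ⟨g, hg⟩ := hp
      have hren : MvPolynomial.rename (⇑(Equiv.swap i j)) (p * X k) =
          MvPolynomial.rename (⇑(Equiv.swap i j)) p * X (Equiv.swap i j k) := by
        simp
      rcases eq_or_ne k i with rfl | hki
      · refine ⟨p + g * X j, ?_⟩
        rw [hren, Equiv.swap_apply_left]
        linear_combination X j * hg
      rcases eq_or_ne k j with rfl | hkj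
      · refine ⟨-p + g * X i, ?_⟩
        rw [hren, Equiv.swap_apply_right]
        linear_combination X i * hg
      · refine ⟨g * X k, ?_⟩
        rw [hren, Equiv.swap_apply_of_ne_of_ne hki hkj]
        linear_combination X k * hg
  obtain ⟨g, hg⟩ := hex
  exact ⟨g, hg, fun y hy => mul_left_cancel₀ hne (hy.trans hg.symm)⟩

/-- The divided-difference operator `Δ_{ij} = (xᵢ - xⱼ)⁻¹ (1 - s_{ij})`. -/
def Delta (i j : Fin n) : Module.End F (MvPolynomial (Fin n) F) where
  toFun f :=
    if h : i ≠ j then (delta_existsUnique F i j h f).exists.choose else 0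
  map_add' f g := by
    by_cases h : i ≠ j
    · simp only [dif_pos h]
      apply (delta_existsUnique F i j h (f + g)).unique
      · exact (delta_existsUnique F i j h (f + g)).exists.choose_spec
      · rw [mul_add, (delta_existsUnique F i j h f).exists.choose_spec,
          (delta_existsUnique F i j h g).exists.choose_spec, map_add]
        ring
    · simp [dif_neg h]
  map_smul' c f := by
    by_cases h : i ≠ j
    · simp only [dif_pos h, RingHom.id_apply]
      apply (delta_existsUnique F i j h (c • f)).unique
      · exact (delta_existsUnique F i j h (c • f)).exists.choose_spec
      · rw [Algebra.mul_smul_comm, (delta_existsUnique F i j h f).exists.choose_spec,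
          map_smul, smul_sub]
    · simp [dif_neg h]

/-- The Dunkl operator `Yᵢ = κ ∂ᵢ + Σ_{j ≠ i} Δ_{ij}`. -/
def Dunkl (κ : F) (i : Fin n) : Module.End F (MvPolynomial (Fin n) F) :=
  κ • (MvPolynomial.pderiv i).toLinearMap + ∑ j ∈ Finset.univ.erase i, Delta F i j

/-- The trigonometric Dunkl (Cherednik) operator `Uᵢ = xᵢ Yᵢ + Σ_{j < i} s_{ji}`. -/
def Cher (κ : F) (i : Fin n) : Module.End F (MvPolynomial (Fin n) F) :=
  LinearMap.mulLeft F (X i) * Dunkl F κ i +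
    ∑ j ∈ Finset.univ.filter (fun j => j < i), swapOp F j i


section Aux

lemma X_sub_ne (i j : Fin n) (h : i ≠ j) : (X i - X j : MvPolynomial (Fin n) F) ≠ 0 :=
  sub_ne_zero_of_ne fun hh => h (MvPolynomial.X_injective hh)

lemma Delta_spec (i j : Fin n) (h : i ≠ j) (f : MvPolynomial (Fin n) F) :
    (X i - X j) * Delta F i j f = f - MvPolynomial.rename (⇑(Equiv.swap i j)) f := by
  have hD : Delta F i j f = (delta_existsUnique F i j h f).exists.choose := by
    simp only [Delta, LinearMap.coe_mk, AddHom.coe_mk, dif_pos h]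
  rw [hD]
  exact (delta_existsUnique F i j h f).exists.choose_spec

lemma Delta_eq (i j : Fin n) (h : i ≠ j) (f g : MvPolynomial (Fin n) F)
    (hg : (X i - X j) * g = f - MvPolynomial.rename (⇑(Equiv.swap i j)) f) :
    Delta F i j f = g :=
  mul_left_cancel₀ (X_sub_ne F i j h) ((Delta_spec F i j h f).trans hg.symm)

lemma Delta_symm (i j : Fin n) (h : i ≠ j) (f : MvPolynomial (Fin n) F) :
    Delta F j i f = -Delta F i j f := by
  apply Delta_eq F j i h.symm
  rw [Equiv.swap_comm j i]
  linear_combination Delta_spec F i j h f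

lemma rename_Delta (w : Equiv.Perm (Fin n)) (i j : Fin n) (h : i ≠ j)
    (f : MvPolynomial (Fin n) F) :
    MvPolynomial.rename (⇑w) (Delta F i j f)
      = Delta F (w i) (w j) (MvPolynomial.rename (⇑w) f) := by
  symm
  apply Delta_eq F (w i) (w j) (fun hh => h (w.injective hh))
  have key : (⇑(Equiv.swap (w i) (w j)) ∘ ⇑w) = ⇑w ∘ ⇑(Equiv.swap i j) := by
    funext x
    simp [Equiv.swap_apply_apply, Equiv.Perm.mul_apply]
  have h2 : (X (w i) - X (w j)) * MvPolynomial.rename (⇑w) (Delta F i j f)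
      = MvPolynomial.rename (⇑w) ((X i - X j) * Delta F i j f) := by
    rw [map_mul, map_sub, rename_X, rename_X]
  rw [h2, Delta_spec F i j h f, map_sub, rename_rename, ← key, ← rename_rename]

lemma Delta_Delta (a b c d : Fin n) (hab : a ≠ b) (hcd : c ≠ d)
    (f : MvPolynomial (Fin n) F) :
    (X a - X b) * Delta F a b (Delta F c d f)
      = Delta F c d f - Delta F (Equiv.swap a b c) (Equiv.swap a b d)
          (MvPolynomial.rename (⇑(Equiv.swap a b)) f) := by
  rw [Delta_spec F a b hab, rename_Delta F (Equiv.swap a b) c d hcd f]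


lemma pderiv_comm' (i j : Fin n) (f : MvPolynomial (Fin n) F) :
    MvPolynomial.pderiv i (MvPolynomial.pderiv j f)
      = MvPolynomial.pderiv j (MvPolynomial.pderiv i f) := by
  induction f using MvPolynomial.induction_on with
  | C a => simp
  | add p q hp hq => simp [hp, hq]
  | mul_X p m hp =>
    simp only [pderiv_mul, pderiv_X, map_add, hp, apply_ite (pderiv i), apply_ite (pderiv j),
      pderiv_one, map_zero, mul_zero, mul_one, mul_ite, add_zero, Pi.single_apply]
    ring

lemma pderiv_rename_swap (i j m : Fin n) (hmi : m ≠ i) (hmj : m ≠ j)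
    (f : MvPolynomial (Fin n) F) :
    MvPolynomial.pderiv m (MvPolynomial.rename (⇑(Equiv.swap i j)) f)
      = MvPolynomial.rename (⇑(Equiv.swap i j)) (MvPolynomial.pderiv m f) := by
  have h := pderiv_rename (Equiv.swap i j).injective m f
  rwa [Equiv.swap_apply_of_ne_of_ne hmi hmj] at h

lemma pderiv_Delta (i j m : Fin n) (hij : i ≠ j) (hmi : m ≠ i) (hmj : m ≠ j)
    (f : MvPolynomial (Fin n) F) :
    MvPolynomial.pderiv m (Delta F i j f) = Delta F i j (MvPolynomial.pderiv m f) := by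
  apply mul_left_cancel₀ (X_sub_ne F i j hij)
  rw [Delta_spec F i j hij]
  have h1 : (X i - X j) * MvPolynomial.pderiv m (Delta F i j f)
      = MvPolynomial.pderiv m ((X i - X j) * Delta F i j f) := by
    rw [pderiv_mul, map_sub, pderiv_X, pderiv_X, Pi.single_apply, Pi.single_apply,
      if_neg (Ne.symm hmi), if_neg (Ne.symm hmj)]
    ring
  rw [h1, Delta_spec F i j hij, map_sub, pderiv_rename_swap F i j m hmi hmj]

lemma pderiv_Delta_self (i j : Fin n) (hij : i ≠ j) (f : MvPolynomial (Fin n) F) :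
    MvPolynomial.pderiv i (Delta F i j f) + MvPolynomial.pderiv j (Delta F i j f)
      = Delta F i j (MvPolynomial.pderiv i f) + Delta F i j (MvPolynomial.pderiv j f) := by
  apply mul_left_cancel₀ (X_sub_ne F i j hij)
  have hXi : MvPolynomial.pderiv i ((X i - X j : MvPolynomial (Fin n) F)) = 1 := by
    rw [map_sub, pderiv_X, pderiv_X, Pi.single_apply, Pi.single_apply,
      if_pos rfl, if_neg (Ne.symm hij)]; ring
  have hXj : MvPolynomial.pderiv j ((X i - X j : MvPolynomial (Fin n) F)) = -1 := by
    rw [map_sub, pderiv_X, pderiv_X, Pi.single_apply, Pi.single_apply,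
      if_neg hij, if_pos rfl]; ring
  have hri : MvPolynomial.pderiv i (MvPolynomial.rename (⇑(Equiv.swap i j)) f)
      = MvPolynomial.rename (⇑(Equiv.swap i j)) (MvPolynomial.pderiv j f) := by
    have h := pderiv_rename (Equiv.swap i j).injective j f
    rwa [Equiv.swap_apply_right] at h
  have hrj : MvPolynomial.pderiv j (MvPolynomial.rename (⇑(Equiv.swap i j)) f)
      = MvPolynomial.rename (⇑(Equiv.swap i j)) (MvPolynomial.pderiv i f) := by
    have h := pderiv_rename (Equiv.swap i j).injective i f
    rwa [Equiv.swap_apply_left] at h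
  have hA' : MvPolynomial.pderiv i ((X i - X j) * Delta F i j f)
      = (X i - X j) * MvPolynomial.pderiv i (Delta F i j f) + Delta F i j f := by
    rw [pderiv_mul, hXi]; ring
  have hB' : MvPolynomial.pderiv j ((X i - X j) * Delta F i j f)
      = (X i - X j) * MvPolynomial.pderiv j (Delta F i j f) - Delta F i j f := by
    rw [pderiv_mul, hXj]; ring
  rw [Delta_spec F i j hij, map_sub, hri] at hA'
  rw [Delta_spec F i j hij, map_sub, hrj] at hB'
  have hC := Delta_spec F i j hij (MvPolynomial.pderiv i f)
  have hD := Delta_spec F i j hij (MvPolynomial.pderiv j f)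
  linear_combination -hA' - hB' - hC - hD

lemma swap_comp_eq (i j k : Fin n) (hij : i ≠ j) (hjk : j ≠ k) (hik : i ≠ k)
    (a b c d : Fin n) (h : ∀ x : Fin n, Equiv.swap a b (Equiv.swap c d x)
        = Equiv.swap i k (Equiv.swap i j x)) : True := trivial

lemma Delta_comm_disjoint (i k j l : Fin n) (hik : i ≠ k) (hjl : j ≠ l)
    (hij : i ≠ j) (hil : i ≠ l) (hkj : k ≠ j) (hkl : k ≠ l)
    (f : MvPolynomial (Fin n) F) :
    Delta F i k (Delta F j l f) = Delta F j l (Delta F i k f) := by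
  have hcomp : ⇑(Equiv.swap j l) ∘ ⇑(Equiv.swap i k) = ⇑(Equiv.swap i k) ∘ ⇑(Equiv.swap j l) := by
    funext x
    simp only [Function.comp_apply, Equiv.swap_apply_def]
    split_ifs <;> simp_all
  apply mul_left_cancel₀
    (mul_ne_zero (X_sub_ne F j l hjl) (X_sub_ne F i k hik))
  have e1 := Delta_Delta F i k j l hik hjl f
  rw [Equiv.swap_apply_of_ne_of_ne hij.symm hkj.symm,
      Equiv.swap_apply_of_ne_of_ne hil.symm hkl.symm] at e1
  have e1' := Delta_Delta F j l i k hjl hik f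
  rw [Equiv.swap_apply_of_ne_of_ne hij hil, Equiv.swap_apply_of_ne_of_ne hkj hkl] at e1'
  have e2 := Delta_spec F j l hjl f
  have e3 := Delta_spec F j l hjl (MvPolynomial.rename (⇑(Equiv.swap i k)) f)
  have e4 := Delta_spec F i k hik f
  have e5 := Delta_spec F i k hik (MvPolynomial.rename (⇑(Equiv.swap j l)) f)
  have hc : MvPolynomial.rename (⇑(Equiv.swap j l)) (MvPolynomial.rename (⇑(Equiv.swap i k)) f)
      = MvPolynomial.rename (⇑(Equiv.swap i k)) (MvPolynomial.rename (⇑(Equiv.swap j l)) f) := by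
    rw [rename_rename, rename_rename, hcomp]
  linear_combination (X j - X l) * e1 + e2 - e3 - (X i - X k) * e1' - e4 + e5 + hc

lemma Delta_trio (i j k : Fin n) (hij : i ≠ j) (hjk : j ≠ k) (hik : i ≠ k)
    (f : MvPolynomial (Fin n) F) :
    Delta F i j (Delta F j k f) - Delta F j k (Delta F i j f)
      - (Delta F i k (Delta F i j f) - Delta F i j (Delta F i k f))
      + (Delta F i k (Delta F j k f) - Delta F j k (Delta F i k f)) = 0 := by
  have hcmp : ∀ (a b c d e g p q : Fin n),
      (⇑(Equiv.swap a b) ∘ ⇑(Equiv.swap c d) : Fin n → Fin n) = ⇑(Equiv.swap e g) ∘ ⇑(Equiv.swap p q) →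
      MvPolynomial.rename (⇑(Equiv.swap a b)) (MvPolynomial.rename (⇑(Equiv.swap c d)) f)
        = MvPolynomial.rename (⇑(Equiv.swap e g)) (MvPolynomial.rename (⇑(Equiv.swap p q)) f) := by
    intro a b c d e g p q h
    rw [rename_rename, rename_rename, h]
  have hU1 : MvPolynomial.rename (⇑(Equiv.swap j k)) (MvPolynomial.rename (⇑(Equiv.swap i k)) f)
      = MvPolynomial.rename (⇑(Equiv.swap i k)) (MvPolynomial.rename (⇑(Equiv.swap i j)) f) := by
    apply hcmp
    funext x
    simp only [Function.comp_apply, Equiv.swap_apply_def]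
    split_ifs <;> simp_all
  have hU2 : MvPolynomial.rename (⇑(Equiv.swap i j)) (MvPolynomial.rename (⇑(Equiv.swap j k)) f)
      = MvPolynomial.rename (⇑(Equiv.swap i k)) (MvPolynomial.rename (⇑(Equiv.swap i j)) f) := by
    apply hcmp
    funext x
    simp only [Function.comp_apply, Equiv.swap_apply_def]
    split_ifs <;> simp_all
  have hV1 : MvPolynomial.rename (⇑(Equiv.swap j k)) (MvPolynomial.rename (⇑(Equiv.swap i j)) f)
      = MvPolynomial.rename (⇑(Equiv.swap i k)) (MvPolynomial.rename (⇑(Equiv.swap j k)) f) := by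
    apply hcmp
    funext x
    simp only [Function.comp_apply, Equiv.swap_apply_def]
    split_ifs <;> simp_all
  have hV2 : MvPolynomial.rename (⇑(Equiv.swap i j)) (MvPolynomial.rename (⇑(Equiv.swap i k)) f)
      = MvPolynomial.rename (⇑(Equiv.swap i k)) (MvPolynomial.rename (⇑(Equiv.swap j k)) f) := by
    apply hcmp
    funext x
    simp only [Function.comp_apply, Equiv.swap_apply_def]
    split_ifs <;> simp_all
  have E1 := Delta_Delta F i j j k hij hjk f
  rw [Equiv.swap_apply_right, Equiv.swap_apply_of_ne_of_ne hik.symm hjk.symm] at E1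
  have E2 := Delta_Delta F j k i j hjk hij f
  rw [Equiv.swap_apply_of_ne_of_ne hij hik, Equiv.swap_apply_left] at E2
  have E3 := Delta_Delta F i k i j hik hij f
  rw [Equiv.swap_apply_left, Equiv.swap_apply_of_ne_of_ne hij.symm hjk] at E3
  rw [Delta_symm F j k hjk] at E3
  have E4 := Delta_Delta F i j i k hij hik f
  rw [Equiv.swap_apply_left, Equiv.swap_apply_of_ne_of_ne hik.symm hjk.symm] at E4
  have E5 := Delta_Delta F i k j k hik hjk f
  rw [Equiv.swap_apply_of_ne_of_ne hij.symm hjk, Equiv.swap_apply_right] at E5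
  rw [Delta_symm F i j hij] at E5
  have E6 := Delta_Delta F j k i k hjk hik f
  rw [Equiv.swap_apply_of_ne_of_ne hij hik, Equiv.swap_apply_right] at E6
  have F1 := Delta_spec F j k hjk f
  have F2 := Delta_spec F i j hij f
  have F3 := Delta_spec F i k hik f
  have G1 := Delta_spec F i k hik (MvPolynomial.rename (⇑(Equiv.swap i j)) f)
  have G2 := Delta_spec F i k hik (MvPolynomial.rename (⇑(Equiv.swap j k)) f)
  have G3 := Delta_spec F j k hjk (MvPolynomial.rename (⇑(Equiv.swap i k)) f)
  rw [hU1] at G3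
  have G4 := Delta_spec F j k hjk (MvPolynomial.rename (⇑(Equiv.swap i j)) f)
  rw [hV1] at G4
  have G5 := Delta_spec F i j hij (MvPolynomial.rename (⇑(Equiv.swap i k)) f)
  rw [hV2] at G5
  have G6 := Delta_spec F i j hij (MvPolynomial.rename (⇑(Equiv.swap j k)) f)
  rw [hU2] at G6
  apply mul_left_cancel₀
    (mul_ne_zero (mul_ne_zero (X_sub_ne F i j hij) (X_sub_ne F j k hjk)) (X_sub_ne F i k hik))
  rw [mul_zero]
  linear_combination ((X j - X k) * (X i - X k)) * E1 - ((X i - X j) * (X i - X k)) * E2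
    - ((X i - X j) * (X j - X k)) * E3 + ((X j - X k) * (X i - X k)) * E4
    + ((X i - X j) * (X j - X k)) * E5 - ((X i - X j) * (X i - X k)) * E6
    + ((X i - X j) + (X i - X k)) * F1 - ((X i - X k) + (X j - X k)) * F2
    + ((X j - X k) - (X i - X j)) * F3
    - (X j - X k) * G1 + (X i - X j) * G2 - (X i - X j) * G3
    - (X i - X k) * G4 + (X j - X k) * G5 + (X i - X k) * G6

end Aux


theorem stmt8 (n : ℕ) (hn : 2 ≤ n) (κ : F) (i j : Fin n) :
    Dunkl F κ i * Dunkl F κ j = Dunkl F κ j * Dunkl F κ i := by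
  rcases eq_or_ne i j with rfl | hij
  · rfl
  apply LinearMap.ext
  intro f
  have expand : ∀ (m : Fin n) (g : MvPolynomial (Fin n) F),
      Dunkl F κ m g = κ • MvPolynomial.pderiv m g + ∑ l ∈ Finset.univ.erase m, Delta F m l g := by
    intro m g
    simp [Dunkl, LinearMap.add_apply, LinearMap.smul_apply, LinearMap.sum_apply]
  have ha := pderiv_comm' F i j f
  -- the kappa-linear part
  have hb1 : ∑ l ∈ Finset.univ.erase j,
      (MvPolynomial.pderiv i (Delta F j l f) - Delta F j l (MvPolynomial.pderiv i f))
      = MvPolynomial.pderiv i (Delta F j i f) - Delta F j i (MvPolynomial.pderiv i f) := by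
    apply Finset.sum_eq_single_of_mem i (Finset.mem_erase.mpr ⟨hij, Finset.mem_univ i⟩)
    intro l hl hli
    rw [pderiv_Delta F j l i (Ne.symm (Finset.mem_erase.mp hl).1) hij (Ne.symm hli), sub_self]
  have hb2 : ∑ k ∈ Finset.univ.erase i,
      (MvPolynomial.pderiv j (Delta F i k f) - Delta F i k (MvPolynomial.pderiv j f))
      = MvPolynomial.pderiv j (Delta F i j f) - Delta F i j (MvPolynomial.pderiv j f) := by
    apply Finset.sum_eq_single_of_mem j (Finset.mem_erase.mpr ⟨hij.symm, Finset.mem_univ j⟩)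
    intro k hk hkj
    rw [pderiv_Delta F i k j (Ne.symm (Finset.mem_erase.mp hk).1) hij.symm (Ne.symm hkj), sub_self]
  rw [Delta_symm F i j hij f, Delta_symm F i j hij (MvPolynomial.pderiv i f), map_neg] at hb1
  rw [Finset.sum_sub_distrib] at hb1 hb2
  have hps := pderiv_Delta_self F i j hij f
  have hb : ∑ l ∈ Finset.univ.erase j, MvPolynomial.pderiv i (Delta F j l f)
        + ∑ k ∈ Finset.univ.erase i, Delta F i k (MvPolynomial.pderiv j f)
      = ∑ k ∈ Finset.univ.erase i, MvPolynomial.pderiv j (Delta F i k f)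
        + ∑ l ∈ Finset.univ.erase j, Delta F j l (MvPolynomial.pderiv i f) := by
    linear_combination hb1 - hb2 - hps
  -- the quadratic part
  set U := (Finset.univ.erase i).erase j with hU
  have hjmem : j ∈ Finset.univ.erase i := Finset.mem_erase.mpr ⟨hij.symm, Finset.mem_univ j⟩
  have himem : i ∈ Finset.univ.erase j := Finset.mem_erase.mpr ⟨hij, Finset.mem_univ i⟩
  have key : ∑ k ∈ Finset.univ.erase i, ∑ l ∈ Finset.univ.erase j,
      (Delta F i k (Delta F j l f) - Delta F j l (Delta F i k f)) = 0 := by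
    rw [show Finset.univ.erase i = insert j U from (Finset.insert_erase hjmem).symm,
      Finset.sum_insert (Finset.notMem_erase j _)]
    have hCji : Delta F i j (Delta F j i f) - Delta F j i (Delta F i j f) = 0 := by
      rw [Delta_symm F i j hij f, map_neg, Delta_symm F i j hij (Delta F i j f)]
      ring
    have h1 : ∑ l ∈ Finset.univ.erase j,
        (Delta F i j (Delta F j l f) - Delta F j l (Delta F i j f))
        = ∑ m ∈ U, (Delta F i j (Delta F j m f) - Delta F j m (Delta F i j f)) := by
      rw [show Finset.univ.erase j = insert i ((Finset.univ.erase j).erase i) from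
          (Finset.insert_erase himem).symm,
        Finset.sum_insert (Finset.notMem_erase i _), hCji, zero_add, hU,
        show (Finset.univ.erase j).erase i = (Finset.univ.erase i).erase j from by
          ext x; simp [Finset.mem_erase, and_left_comm, and_comm]]
    have h2 : ∀ k ∈ U, ∑ l ∈ Finset.univ.erase j,
        (Delta F i k (Delta F j l f) - Delta F j l (Delta F i k f))
        = (Delta F i k (Delta F j i f) - Delta F j i (Delta F i k f))
          + (Delta F i k (Delta F j k f) - Delta F j k (Delta F i k f)) := by
      intro k hk
      have hkj : k ≠ j := (Finset.mem_erase.mp hk).1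
      have hki : k ≠ i := (Finset.mem_erase.mp (Finset.mem_of_mem_erase hk)).1
      have hkmem : k ∈ (Finset.univ.erase j).erase i :=
        Finset.mem_erase.mpr ⟨hki, Finset.mem_erase.mpr ⟨hkj, Finset.mem_univ k⟩⟩
      rw [show Finset.univ.erase j
            = insert i (insert k (((Finset.univ.erase j).erase i).erase k)) from by
          rw [Finset.insert_erase hkmem, Finset.insert_erase himem]]
      have hnotmem : i ∉ insert k (((Finset.univ.erase j).erase i).erase k) := by
        intro hmem
        rcases Finset.mem_insert.mp hmem with h | h
        · exact hki h.symm
        · exact (Finset.notMem_erase i _) (Finset.mem_of_mem_erase h)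
      rw [Finset.sum_insert hnotmem, Finset.sum_insert (Finset.notMem_erase k _)]
      have hzero : ∑ l ∈ ((Finset.univ.erase j).erase i).erase k,
          (Delta F i k (Delta F j l f) - Delta F j l (Delta F i k f)) = 0 := by
        apply Finset.sum_eq_zero
        intro l hl
        have hlk : l ≠ k := (Finset.mem_erase.mp hl).1
        have hli : l ≠ i := (Finset.mem_erase.mp (Finset.mem_of_mem_erase hl)).1
        have hlj : l ≠ j :=
          (Finset.mem_erase.mp (Finset.mem_of_mem_erase (Finset.mem_of_mem_erase hl))).1
        rw [Delta_comm_disjoint F i k j l hki.symm hlj.symm hij hli.symm hkj hlk.symm, sub_self]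
      rw [hzero, add_zero]
    rw [h1, Finset.sum_congr rfl h2, ← Finset.sum_add_distrib]
    apply Finset.sum_eq_zero
    intro m hm
    have hmj : m ≠ j := (Finset.mem_erase.mp hm).1
    have hmi : m ≠ i := (Finset.mem_erase.mp (Finset.mem_of_mem_erase hm)).1
    have htrio := Delta_trio F i j m hij hmj.symm hmi.symm f
    rw [Delta_symm F i j hij f, map_neg, Delta_symm F i j hij (Delta F i m f)]
    linear_combination htrio
  simp only [Finset.sum_sub_distrib] at key
  have hc : ∑ k ∈ Finset.univ.erase i, ∑ l ∈ Finset.univ.erase j,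
        Delta F i k (Delta F j l f)
      = ∑ l ∈ Finset.univ.erase j, ∑ k ∈ Finset.univ.erase i,
        Delta F j l (Delta F i k f) := by
    rw [show ∑ l ∈ Finset.univ.erase j, ∑ k ∈ Finset.univ.erase i,
        Delta F j l (Delta F i k f)
        = ∑ k ∈ Finset.univ.erase i, ∑ l ∈ Finset.univ.erase j,
        Delta F j l (Delta F i k f) from Finset.sum_comm]
    linear_combination key
  -- put everything together
  show Dunkl F κ i (Dunkl F κ j f) = Dunkl F κ j (Dunkl F κ i f)
  rw [expand i (Dunkl F κ j f), expand j (Dunkl F κ i f), expand j f, expand i f]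
  simp only [map_add, map_smul, map_sum]
  simp only [smul_add, Finset.sum_add_distrib, MvPolynomial.smul_eq_C_mul, ← Finset.mul_sum]
  simp only [pderiv_C_mul]
  linear_combination (C κ * C κ) * ha + C κ * hb + hc
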